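/- Fix b > 1. For all x, y ∈ ℕ, decomposing nAdicCons_b(x, y) via nAdicDeCons_b recovers (x, y): that is, the head of b^x * (y + y/(b−1) + 1) is x and its tail is y, where the head of z > 0 is ν_b(z) and the tail is (z / b^{ν_b(z)}) − (z / b^{ν_b(z)}) / b − 1. -/

import Mathlib

/-! Write `y = (b - 1) q + r` with `r < b - 1`. Then `m := y + q + 1 = b q + (r + 1)` with
`0 < r + 1 < b`, so `b ∤ m` and `m / b = q`. Hence `ν_b(b^x m) = x`, stripping `b^x` gives back `m`,
and `m - m / b - 1 = y`. -/

namespace Nat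

variable {b : ℕ}

theorem add_div_pred_add_one_eq (hb : 1 < b) (y : ℕ) :
    y + y / (b - 1) + 1 = b * (y / (b - 1)) + (y % (b - 1) + 1) := by
  have hy := div_add_mod y (b - 1)
  calc y + y / (b - 1) + 1 = (b - 1 + 1) * (y / (b - 1)) + (y % (b - 1) + 1) := by
        nth_rw 1 [← hy]; ring
    _ = b * (y / (b - 1)) + (y % (b - 1) + 1) := by rw [Nat.sub_add_cancel hb.le]

theorem mod_pred_add_one_lt (hb : 1 < b) (y : ℕ) : y % (b - 1) + 1 < b := by
  have := mod_lt y (by omega : 0 < b - 1)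
  omega

theorem add_div_pred_add_one_mod (hb : 1 < b) (y : ℕ) :
    (y + y / (b - 1) + 1) % b = y % (b - 1) + 1 := by
  rw [add_div_pred_add_one_eq hb, mul_add_mod, mod_eq_of_lt (mod_pred_add_one_lt hb y)]

theorem add_div_pred_add_one_div (hb : 1 < b) (y : ℕ) :
    (y + y / (b - 1) + 1) / b = y / (b - 1) := by
  rw [add_div_pred_add_one_eq hb, mul_add_div (by omega), div_eq_of_lt (mod_pred_add_one_lt hb y),
    add_zero]

theorem not_dvd_add_div_pred_add_one (hb : 1 < b) (y : ℕ) : ¬ b ∣ y + y / (b - 1) + 1 := by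
  rw [dvd_iff_mod_eq_zero, add_div_pred_add_one_mod hb]
  exact succ_ne_zero _

end Nat

theorem padicValNat_base_pow_mul_of_not_dvd {b m : ℕ} (hb : 1 < b) (hm : ¬ b ∣ m) (k : ℕ) :
    padicValNat b (b ^ k * m) = k := by
  have hm0 : m ≠ 0 := by rintro rfl; exact hm (dvd_zero b)
  rw [padicValNat_base_pow_mul hb hm0, padicValNat.eq_zero_of_not_dvd hm, zero_add]

theorem stmt19 (b : ℕ) (hb : 1 < b) (x y : ℕ) :
    padicValNat b (b ^ x * (y + y / (b - 1) + 1)) = x ∧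
    (b ^ x * (y + y / (b - 1) + 1)) / b ^ padicValNat b (b ^ x * (y + y / (b - 1) + 1)) -
      ((b ^ x * (y + y / (b - 1) + 1)) / b ^ padicValNat b (b ^ x * (y + y / (b - 1) + 1))) / b -
      1 = y := by
  have hval : padicValNat b (b ^ x * (y + y / (b - 1) + 1)) = x :=
    padicValNat_base_pow_mul_of_not_dvd hb (Nat.not_dvd_add_div_pred_add_one hb y) x
  refine ⟨hval, ?_⟩
  rw [hval, Nat.mul_div_cancel_left _ (Nat.pow_pos (by omega)), Nat.add_div_pred_add_one_div hb]
  omega
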